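/- arXiv:math/0604427 — 4 statements merged into one kernel-verified Lean document; each statement's English description precedes it below -/
import Mathlib

section
/- Let p be an odd prime. For all integers u, v with 1 ≤ u < κ_p and 1 ≤ v < κ_p, one has γ_p(u·v^{-1}) = 0 in 𝔽_p (here v < κ_p ≤ p, so v is invertible mod p). -/
def fermatQuotient (p : ℕ) (k : ℤ) : ℕ :=
  (((k ^ (p - 1) - 1) / p) % p).toNat

noncomputable def kappa (p : ℕ) : ℕ :=
  sInf {n : ℕ | 0 < n ∧ ¬ p ∣ n ∧ fermatQuotient p n ≠ 0}

def mirimanoff (p : ℕ) (t : ZMod p) : ZMod p :=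
  ∑ j ∈ Finset.Icc 1 (p - 1), (j : ZMod p)⁻¹ * t ^ j

/-!
If `0 < n < κ_p` then `q_p(n) = 0`, i.e. `n ^ p ≡ n (mod p²)`; this needs `p ∤ n`, which holds
because `q_p(p - 1) = 1` gives `κ_p ≤ p - 1`. The congruence therefore applies to `u`, `v` and
`v - u` (using that `p` is odd for the sign). For `w ≡ u / v (mod p²)` it follows that
`v ^ p ((1 - w) ^ p + w ^ p - 1) ≡ (v - u) + u - v = 0 (mod p²)`. On the other hand
`((1 - w) ^ p + w ^ p - 1) / p ≡ -γ_p(w) (mod p)` by the binomial theorem, since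
`k · C(p, k) / p = C(p - 1, k - 1) ≡ (-1) ^ (k - 1) (mod p)`.
-/

open Finset

theorem fermatQuotient_eq_zero_iff_dvd {p : ℕ} (hp : p ≠ 0) {k : ℤ}
    (h : (p : ℤ) ∣ k ^ (p - 1) - 1) :
    fermatQuotient p k = 0 ↔ (p : ℤ) ^ 2 ∣ k ^ (p - 1) - 1 := by
  obtain ⟨c, hc⟩ := h
  have hp' : (p : ℤ) ≠ 0 := by exact_mod_cast hp
  rw [fermatQuotient, hc, Int.mul_ediv_cancel_left _ hp', Int.toNat_eq_zero, pow_two,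
    mul_dvd_mul_iff_left hp', Int.dvd_iff_emod_eq_zero]
  have := Int.emod_nonneg c hp'
  omega

theorem fermatQuotient_eq_zero_iff {p : ℕ} [Fact p.Prime] {k : ℤ} (hk : ¬ (p : ℤ) ∣ k) :
    fermatQuotient p k = 0 ↔ (k : ZMod (p ^ 2)) ^ (p - 1) = 1 := by
  have hfermat : (p : ℤ) ∣ k ^ (p - 1) - 1 := by
    rw [← ZMod.intCast_zmod_eq_zero_iff_dvd, Int.cast_sub, Int.cast_pow, Int.cast_one,
      ZMod.pow_card_sub_one_eq_one (by rwa [Ne, ZMod.intCast_zmod_eq_zero_iff_dvd]), sub_self]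
  rw [fermatQuotient_eq_zero_iff_dvd (Fact.out : p.Prime).ne_zero hfermat, ← sub_eq_zero,
    ← Int.natCast_pow, ← ZMod.intCast_zmod_eq_zero_iff_dvd]
  norm_cast

theorem one_add_pow_of_sq_eq_zero {R : Type*} [CommRing R] {x : R} (hx : x ^ 2 = 0) (n : ℕ) :
    (1 + x) ^ n = 1 + n * x := by
  induction n with
  | zero => simp
  | succ n ih =>
    push_cast
    linear_combination (1 + x) * ih + n * hx

theorem kappa_le_sub_one {p : ℕ} (hp : p.Prime) (hodd : Odd p) : kappa p ≤ p - 1 := by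
  have := Fact.mk hp
  have hp3 : 3 ≤ p := by
    obtain ⟨m, rfl⟩ := hodd
    have := hp.two_le
    omega
  have hpp : ¬ p ∣ p - 1 := fun h => by have := Nat.le_of_dvd (by omega) h; omega
  refine Nat.sInf_le ⟨by omega, hpp, ?_⟩
  rw [Ne, fermatQuotient_eq_zero_iff (by exact_mod_cast hpp), Int.cast_natCast,
    Nat.cast_sub hp.one_le, Nat.cast_one]
  have hsq : (-(p : ZMod (p ^ 2))) ^ 2 = 0 := by
    rw [neg_sq, ← Nat.cast_pow, ZMod.natCast_self]
  have hp0 : (p : ZMod (p ^ 2)) ≠ 0 := by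
    rw [Ne, ZMod.natCast_eq_zero_iff]
    intro h
    have := Nat.le_of_dvd hp.pos h
    nlinarith
  have heven : Even (p - 1) := Nat.Odd.sub_odd hodd odd_one
  rw [← neg_sub, heven.neg_pow, sub_eq_add_neg, one_add_pow_of_sq_eq_zero hsq,
    Nat.cast_sub hp.one_le]
  intro h
  apply hp0
  linear_combination h + hsq

theorem not_dvd_of_lt_kappa {p n : ℕ} (hp : p.Prime) (hodd : Odd p) (hn0 : 0 < n)
    (hn : n < kappa p) : ¬ p ∣ n := fun h => by
  have := Nat.le_of_dvd hn0 h
  have := kappa_le_sub_one hp hodd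
  omega

theorem natCast_pow_eq_self_of_lt_kappa {p n : ℕ} (hp : p.Prime) (hodd : Odd p)
    (hn : n < kappa p) : (n : ZMod (p ^ 2)) ^ p = n := by
  have := Fact.mk hp
  rcases n.eq_zero_or_pos with rfl | hn0
  · simp [hp.ne_zero]
  have hpn := not_dvd_of_lt_kappa hp hodd hn0 hn
  have hq : fermatQuotient p n = 0 := by
    by_contra h
    exact Nat.notMem_of_lt_sInf hn ⟨hn0, hpn, h⟩
  rw [fermatQuotient_eq_zero_iff (by exact_mod_cast hpn), Int.cast_natCast] at hq
  calc (n : ZMod (p ^ 2)) ^ p = (n : ZMod (p ^ 2)) ^ (p - 1) * n := by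
        rw [← pow_succ, Nat.sub_add_cancel hp.one_le]
    _ = n := by rw [hq, one_mul]

theorem intCast_pow_eq_self_of_lt_kappa {p : ℕ} {s : ℤ} (hp : p.Prime) (hodd : Odd p)
    (hs : s.natAbs < kappa p) : (s : ZMod (p ^ 2)) ^ p = s := by
  obtain ⟨n, rfl | rfl⟩ := Int.eq_nat_or_neg s
  · exact_mod_cast natCast_pow_eq_self_of_lt_kappa hp hodd hs
  · rw [Int.natAbs_neg, Int.natAbs_natCast] at hs
    rw [Int.cast_neg, hodd.neg_pow, Int.cast_natCast, natCast_pow_eq_self_of_lt_kappa hp hodd hs]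

theorem one_sub_pow_add_pow_sub_one_eq_zero {R : Type*} [CommRing R] {p : ℕ} {a b w : R}
    (hunit : IsUnit b) (hw : b * w = a) (ha : a ^ p = a) (hb : b ^ p = b)
    (hab : (b - a) ^ p = b - a) : (1 - w) ^ p + w ^ p - 1 = 0 := by
  refine (hunit.pow p).mul_right_eq_zero.mp ?_
  calc b ^ p * ((1 - w) ^ p + w ^ p - 1) = (b * (1 - w)) ^ p + (b * w) ^ p - b ^ p := by
        rw [mul_pow, mul_pow]; ring
    _ = 0 := by rw [mul_one_sub, hw, ha, hb, hab]; ring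

theorem one_sub_pow_add_pow_sub_one {R : Type*} [CommRing R] {p : ℕ} (hp : p.Prime)
    (hodd : Odd p) (w : R) :
    (1 - w) ^ p + w ^ p - 1
      = p * ∑ k ∈ Icc 1 (p - 1), (-1) ^ k * ((p.choose k / p : ℕ) : R) * w ^ k := by
  have hbinom : (1 - w) ^ p = ∑ k ∈ range (p + 1), (-w) ^ k * p.choose k := by
    simpa [sub_eq_neg_add] using add_pow (-w) 1 p
  have hIcc : Icc 1 (p - 1) = Ico 1 p := by
    ext k; simp only [mem_Icc, mem_Ico]; have := hp.one_le; omega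
  rw [hbinom, range_eq_Ico, sum_Ico_succ_top (Nat.zero_le p),
    sum_eq_sum_Ico_succ_bot hp.pos, hIcc, mul_sum]
  have hterm : ∀ k ∈ Ico 1 p, (-w) ^ k * p.choose k
      = p * ((-1) ^ k * ((p.choose k / p : ℕ) : R) * w ^ k) := by
    intro k hk
    rw [mem_Ico] at hk
    rw [← Nat.mul_div_cancel' (hp.dvd_choose_self (by omega) hk.2), Nat.cast_mul,
      Nat.mul_div_cancel_left _ hp.pos, neg_pow]
    ring
  rw [sum_congr rfl hterm, hodd.neg_pow, Nat.choose_self]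
  simp

theorem ZMod.natCast_sub_one_choose {p j : ℕ} [Fact p.Prime] (hj : j < p) :
    ((p - 1).choose j : ZMod p) = (-1) ^ j := by
  have h := congrArg (Int.cast : ℤ → ZMod p)
    (Int.alternating_sum_range_choose_eq_choose (n := p - 1) (m := j))
  push_cast at h
  rw [Nat.sub_add_cancel (Fact.out : p.Prime).one_le, sum_range_succ',
    sum_eq_zero fun k hk => ?_, Nat.choose_zero_right, Nat.cast_one, zero_add, pow_zero,
    mul_one] at h
  · have hsq : (-1 : ZMod p) ^ (j + j) = 1 := Even.neg_one_pow ⟨j, rfl⟩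
    linear_combination -(-1) ^ j * h - ((p - 1).choose j : ZMod p) * hsq
  · rw [mem_range] at hk
    rw [(ZMod.natCast_eq_zero_iff _ _).mpr
      ((Fact.out : p.Prime).dvd_choose_self k.succ_ne_zero (by omega)), mul_zero]

theorem Nat.Prime.mul_choose_div_self {p k : ℕ} (hp : p.Prime) (hk0 : 0 < k) (hkp : k < p) :
    k * (p.choose k / p) = (p - 1).choose (k - 1) := by
  refine Nat.eq_of_mul_eq_mul_left hp.pos ?_
  have h := Nat.add_one_mul_choose_eq (p - 1) (k - 1)
  rw [Nat.sub_add_cancel hp.one_le, Nat.sub_add_cancel hk0] at h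
  rw [h, mul_left_comm, Nat.mul_div_cancel' (hp.dvd_choose_self hk0.ne' hkp), mul_comm]

theorem ZMod.natCast_choose_div_self {p k : ℕ} [Fact p.Prime] (hk0 : 0 < k) (hkp : k < p) :
    ((p.choose k / p : ℕ) : ZMod p) = (-1) ^ (k - 1) * (k : ZMod p)⁻¹ := by
  have hk : (k : ZMod p) ≠ 0 := by
    rw [Ne, ZMod.natCast_eq_zero_iff]
    exact fun h => absurd (Nat.le_of_dvd hk0 h) (by omega)
  rw [eq_mul_inv_iff_mul_eq₀ hk, mul_comm, ← Nat.cast_mul,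
    (Fact.out : p.Prime).mul_choose_div_self hk0 hkp, ZMod.natCast_sub_one_choose (by omega)]

theorem sum_choose_div_self_mul_pow_eq_neg_mirimanoff {p : ℕ} [Fact p.Prime] (t : ZMod p) :
    ∑ k ∈ Icc 1 (p - 1), (-1) ^ k * ((p.choose k / p : ℕ) : ZMod p) * t ^ k
      = -mirimanoff p t := by
  rw [mirimanoff, ← sum_neg_distrib]
  refine sum_congr rfl fun k hk => ?_
  rw [mem_Icc] at hk
  have hsign : (-1 : ZMod p) ^ k * (-1) ^ (k - 1) = -1 := by
    rw [← pow_add, show k + (k - 1) = 2 * (k - 1) + 1 by omega, pow_succ, pow_mul]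
    simp
  rw [ZMod.natCast_choose_div_self (by omega) (by omega)]
  linear_combination ((k : ZMod p)⁻¹ * t ^ k) * hsign

theorem mirimanoff_cast_eq_zero_iff {p : ℕ} (hp : p.Prime) (hodd : Odd p) (w : ZMod (p ^ 2)) :
    mirimanoff p w.cast = 0 ↔ (1 - w) ^ p + w ^ p - 1 = 0 := by
  have := Fact.mk hp
  obtain ⟨z, rfl⟩ := ZMod.intCast_surjective w
  set S : ℤ := ∑ k ∈ Icc 1 (p - 1), (-1) ^ k * ((p.choose k / p : ℕ) : ℤ) * z ^ k with hS
  have hpS : (1 - (z : ZMod (p ^ 2))) ^ p + (z : ZMod (p ^ 2)) ^ p - 1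
      = ((p * S : ℤ) : ZMod (p ^ 2)) := by
    rw [one_sub_pow_add_pow_sub_one hp hodd, hS]
    simp only [Int.cast_mul, Int.cast_sum, Int.cast_pow, Int.cast_neg, Int.cast_one,
      Int.cast_natCast]
  have hSγ : ((S : ℤ) : ZMod p) = -mirimanoff p z := by
    rw [hS, ← sum_choose_div_self_mul_pow_eq_neg_mirimanoff]
    simp only [Int.cast_sum, Int.cast_mul, Int.cast_pow, Int.cast_neg, Int.cast_one,
      Int.cast_natCast]
  rw [ZMod.cast_intCast (dvd_pow_self p two_ne_zero), hpS, ← neg_eq_zero, ← hSγ,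
    ZMod.intCast_zmod_eq_zero_iff_dvd, ZMod.intCast_zmod_eq_zero_iff_dvd, Nat.cast_pow, pow_two,
    mul_dvd_mul_iff_left (by exact_mod_cast hp.ne_zero)]

theorem mirimanoff_zero_of_lt_kappa_general (p : ℕ) (hp : p.Prime) (hodd : Odd p)
    (u v : ℕ) (hu : u < kappa p) (hv1 : 1 ≤ v) (hv : v < kappa p) :
    mirimanoff p ((u : ZMod p) * (v : ZMod p)⁻¹) = 0 := by
  have := Fact.mk hp
  have hdvd : p ∣ p ^ 2 := dvd_pow_self p two_ne_zero
  have hv_unit : IsUnit (v : ZMod (p ^ 2)) :=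
    (ZMod.isUnit_iff_coprime v (p ^ 2)).mpr <| Nat.Coprime.pow_right 2 <|
      (hp.coprime_iff_not_dvd.mpr (not_dvd_of_lt_kappa hp hodd hv1 hv)).symm
  have hvu : ((v : ZMod (p ^ 2)) - u) ^ p = v - u := by
    exact_mod_cast intCast_pow_eq_self_of_lt_kappa hp hodd (s := v - u) (by omega)
  have hinv : ((v : ZMod (p ^ 2))⁻¹.cast : ZMod p) = (v : ZMod p)⁻¹ :=
    eq_inv_of_mul_eq_one_right <| by
      rw [← ZMod.cast_natCast hdvd, ← ZMod.cast_mul hdvd, ZMod.mul_inv_of_unit _ hv_unit,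
        ZMod.cast_one hdvd]
  rw [← ZMod.cast_natCast hdvd u, ← hinv, ← ZMod.cast_mul hdvd,
    mirimanoff_cast_eq_zero_iff hp hodd]
  exact one_sub_pow_add_pow_sub_one_eq_zero hv_unit
    (by rw [mul_left_comm, ZMod.mul_inv_of_unit _ hv_unit, mul_one])
    (natCast_pow_eq_self_of_lt_kappa hp hodd hu) (natCast_pow_eq_self_of_lt_kappa hp hodd hv) hvu

theorem mirimanoff_zero_of_lt_kappa (p : ℕ) (hp : p.Prime) (hodd : Odd p)
    (u v : ℕ) (hu1 : 1 ≤ u) (hu : u < kappa p) (hv1 : 1 ≤ v) (hv : v < kappa p) :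
    mirimanoff p ((u : ZMod p) * (v : ZMod p)⁻¹) = 0 :=
  mirimanoff_zero_of_lt_kappa_general p hp hodd u v hu hv1 hv
end

section
/- For every odd prime p, κ_p ≤ (p + 1)/2. -/
lemma pow_one_add_of_sq {R : Type*} [CommRing R] {t : R} (ht : t * t = 0) (n : ℕ) :
    (1 + t) ^ n = 1 + (n : R) * t := by
  induction n with
  | zero => simp
  | succ n ih =>
    rw [pow_succ, ih]
    push_cast
    linear_combination (n : R) * ht

lemma fq_ne_zero {p : ℕ} (hp : p.Prime) (n : ℕ) (hn : ¬ p ∣ n)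
    (h2 : ((n : ZMod (p ^ 2))) ^ (p - 1) ≠ 1) : fermatQuotient p (n : ℤ) ≠ 0 := by
  haveI := Fact.mk hp
  have hp0 : (p : ℤ) ≠ 0 := by exact_mod_cast hp.ne_zero
  have hfermat : (p : ℤ) ∣ (n : ℤ) ^ (p - 1) - 1 := by
    have hone : ((n : ZMod p)) ^ (p - 1) = 1 := by
      apply ZMod.pow_card_sub_one_eq_one
      simpa [ZMod.natCast_eq_zero_iff] using hn
    have h0 : (((n : ℤ) ^ (p - 1) - 1 : ℤ) : ZMod p) = 0 := by
      push_cast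
      rw [hone]; ring
    exact_mod_cast (ZMod.intCast_zmod_eq_zero_iff_dvd _ p).mp h0
  have hnotsq : ¬ (((p ^ 2 : ℕ) : ℤ) ∣ (n : ℤ) ^ (p - 1) - 1) := by
    intro h
    apply h2
    have h0 := (ZMod.intCast_zmod_eq_zero_iff_dvd ((n : ℤ) ^ (p - 1) - 1) (p ^ 2)).mpr h
    push_cast at h0
    linear_combination h0
  obtain ⟨d, hd⟩ := hfermat
  have hnd : ¬ (p : ℤ) ∣ d := by
    rintro ⟨e, he⟩
    exact hnotsq ⟨e, by push_cast; rw [hd, he]; ring⟩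
  unfold fermatQuotient
  rw [hd, Int.mul_ediv_cancel_left _ hp0]
  intro h
  rw [Int.toNat_eq_zero] at h
  have hge := Int.emod_nonneg d hp0
  exact hnd (Int.dvd_of_emod_eq_zero (le_antisymm h hge))

theorem kappa_le_half (p : ℕ) (hp : p.Prime) (hodd : Odd p) :
    kappa p ≤ (p + 1) / 2 := by
  haveI := Fact.mk hp
  have hne2 : p ≠ 2 := by rintro rfl; simp [Nat.odd_iff] at hodd
  have hp3 : 3 ≤ p := by have := hp.two_le; omega
  set a := (p - 1) / 2 with ha_def
  set b := (p + 1) / 2 with hb_def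
  obtain ⟨m, hm⟩ := hodd
  have heven1 : 2 ∣ p - 1 := by omega
  have heven2 : 2 ∣ p + 1 := by omega
  have h2a : 2 * a = p - 1 := Nat.mul_div_cancel' heven1
  have h2b : 2 * b = p + 1 := Nat.mul_div_cancel' heven2
  set t : ZMod (p ^ 2) := ((p : ℕ) : ZMod (p ^ 2)) with ht_def
  have ht : t * t = 0 := by
    rw [show t * t = ((p ^ 2 : ℕ) : ZMod (p ^ 2)) by rw [ht_def]; push_cast; ring,
      ZMod.natCast_self]
  have hpm : ((p - 1 : ℕ) : ZMod (p ^ 2)) = t - 1 := by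
    have h1 : (1 : ℕ) ≤ p := hp.one_lt.le
    rw [Nat.cast_sub h1, ht_def]; push_cast; ring
  have heven : Even (p - 1) := by
    rcases heven1 with ⟨c, hc⟩; exact ⟨c, by omega⟩
  have e1 : ((p - 1 : ℕ) : ZMod (p ^ 2)) ^ (p - 1) = 1 + t := by
    rw [hpm, show t - 1 = -(1 + (-t)) by ring, heven.neg_pow,
      pow_one_add_of_sq (show (-t) * (-t) = 0 by linear_combination ht), hpm]
    linear_combination -ht
  have e2 : ((p + 1 : ℕ) : ZMod (p ^ 2)) ^ (p - 1) = 1 - t := by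
    have hpp : ((p + 1 : ℕ) : ZMod (p ^ 2)) = 1 + t := by rw [ht_def]; push_cast; ring
    rw [hpp, pow_one_add_of_sq ht, hpm]
    linear_combination ht
  have key : (a : ZMod (p ^ 2)) ^ (p - 1) ≠ 1 ∨ (b : ZMod (p ^ 2)) ^ (p - 1) ≠ 1 := by
    by_contra h
    push_neg at h
    obtain ⟨ha, hb⟩ := h
    have c1 : (2 : ZMod (p ^ 2)) ^ (p - 1) = 1 + t := by
      rw [show ((p - 1 : ℕ) : ZMod (p ^ 2)) = ((2 * a : ℕ) : ZMod (p ^ 2)) by rw [h2a]] at e1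
      push_cast at e1
      rw [mul_pow, ha, mul_one] at e1
      exact e1
    have c2 : (2 : ZMod (p ^ 2)) ^ (p - 1) = 1 - t := by
      rw [show ((p + 1 : ℕ) : ZMod (p ^ 2)) = ((2 * b : ℕ) : ZMod (p ^ 2)) by rw [h2b]] at e2
      push_cast at e2
      rw [mul_pow, hb, mul_one] at e2
      exact e2
    have h2t : ((2 * p : ℕ) : ZMod (p ^ 2)) = 0 := by
      push_cast
      rw [← ht_def]
      linear_combination c2 - c1
    have hdvd : p ^ 2 ∣ 2 * p := (ZMod.natCast_eq_zero_iff _ _).mp h2t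
    have hpd : p ∣ 2 := by
      rw [pow_two, mul_comm 2 p] at hdvd
      exact (Nat.mul_dvd_mul_iff_left hp.pos).mp hdvd
    have := Nat.le_of_dvd (by norm_num) hpd
    omega
  have hale : a ≤ b := by omega
  rcases key with hk | hk
  · have hmem : a ∈ {n : ℕ | 0 < n ∧ ¬ p ∣ n ∧ fermatQuotient p n ≠ 0} := by
      refine ⟨by omega, ?_, fq_ne_zero hp a ?_ hk⟩ <;>
        · intro hd; have := Nat.le_of_dvd (by omega) hd; omega
    exact le_trans (Nat.sInf_le hmem) hale
  · have hmem : b ∈ {n : ℕ | 0 < n ∧ ¬ p ∣ n ∧ fermatQuotient p n ≠ 0} := by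
      refine ⟨by omega, ?_, fq_ne_zero hp b ?_ hk⟩ <;>
        · intro hd; have := Nat.le_of_dvd (by omega) hd; omega
    exact Nat.sInf_le hmem
end

section
/- For every odd prime p, the integer κ_p is prime. -/
lemma fq_zero_iff (p : ℕ) (hp : p.Prime) (k : ℤ) (hk : ¬ (p:ℤ) ∣ k) :
    fermatQuotient p k = 0 ↔ (p:ℤ)^2 ∣ k^(p-1) - 1 := by
  haveI : Fact p.Prime := ⟨hp⟩
  have hp0 : (0:ℤ) < p := by exact_mod_cast hp.pos
  have hdvd : (p:ℤ) ∣ k^(p-1) - 1 := by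
    have hk0 : (k : ZMod p) ≠ 0 := by
      rwa [Ne, ZMod.intCast_zmod_eq_zero_iff_dvd]
    have := ZMod.pow_card_sub_one_eq_one hk0
    rw [← ZMod.intCast_zmod_eq_zero_iff_dvd]
    push_cast
    rw [this]
    ring
  unfold fermatQuotient
  rw [Int.toNat_eq_zero]
  constructor
  · intro h
    have h0 : (k^(p-1) - 1) / p % p = 0 :=
      le_antisymm h (Int.emod_nonneg _ hp0.ne')
    have : (p:ℤ) ∣ (k^(p-1) - 1) / p := Int.dvd_of_emod_eq_zero h0
    have := (Int.dvd_div_iff_mul_dvd hdvd).mp this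
    rwa [sq]
  · intro h
    have : (p:ℤ) ∣ (k^(p-1) - 1) / p := by
      rw [Int.dvd_div_iff_mul_dvd hdvd, ← sq]; exact h
    rw [Int.emod_eq_zero_of_dvd this]

lemma fq_mul_zero (p : ℕ) (hp : p.Prime) (a b : ℤ)
    (ha : ¬ (p:ℤ) ∣ a) (hb : ¬ (p:ℤ) ∣ b)
    (ha0 : fermatQuotient p a = 0) (hb0 : fermatQuotient p b = 0) :
    fermatQuotient p (a * b) = 0 := by
  have hpz : Prime (p:ℤ) := Nat.prime_iff_prime_int.mp hp
  have hab : ¬ (p:ℤ) ∣ a * b := fun h =>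
    ((hpz.dvd_mul.mp h).elim ha hb)
  rw [fq_zero_iff p hp _ ha] at ha0
  rw [fq_zero_iff p hp _ hb] at hb0
  rw [fq_zero_iff p hp _ hab]
  have : (a*b)^(p-1) - 1 = a^(p-1) * (b^(p-1) - 1) + (a^(p-1) - 1) := by ring
  rw [this]
  exact dvd_add (Dvd.dvd.mul_left hb0 _) ha0

lemma one_add_pow_dvd (x : ℤ) (n : ℕ) : x^2 ∣ (1+x)^n - (1 + n*x) := by
  induction n with
  | zero => simp
  | succ n ih =>
    have h : (1+x)^(n+1) - (1 + ((n:ℤ)+1)*x)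
        = (1+x) * ((1+x)^n - (1 + n*x)) + n * x^2 := by ring
    push_cast
    rw [h]
    exact dvd_add (Dvd.dvd.mul_left ih _) (Dvd.dvd.mul_left dvd_rfl _)

lemma fq_succ_ne (p : ℕ) (hp : p.Prime) : fermatQuotient p ((p:ℤ)+1) ≠ 0 := by
  have hk : ¬ (p:ℤ) ∣ ((p:ℤ)+1) := by
    intro h
    have h1 : (p:ℤ) ∣ 1 := (dvd_add_right dvd_rfl).mp h
    have := Int.le_of_dvd one_pos h1
    have := hp.two_le
    omega
  intro h
  rw [fq_zero_iff p hp _ hk] at h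
  have h2 := one_add_pow_dvd (p:ℤ) (p-1)
  rw [add_comm (1:ℤ) (p:ℤ)] at h2
  have h4 : (p:ℤ)^2 ∣ ((p-1:ℕ):ℤ) * p := by
    have heq : ((p:ℤ)+1)^(p-1) - 1 - (((p:ℤ)+1)^(p-1) - (1 + ((p-1:ℕ):ℤ)*p))
        = ((p-1:ℕ):ℤ)*p := by ring
    have := dvd_sub h h2
    rwa [heq] at this
  have h5 : (p:ℤ) ∣ ((p-1:ℕ):ℤ) := by
    have hp0 : (p:ℤ) ≠ 0 := by
      have := hp.pos; exact_mod_cast this.ne'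
    rw [sq] at h4
    exact (mul_dvd_mul_iff_right hp0).mp h4
  have h6 : p ∣ p - 1 := by exact_mod_cast h5
  have := Nat.le_of_dvd (by have := hp.two_le; omega : 0 < p - 1) h6
  have := hp.two_le
  omega

theorem kappa_prime (p : ℕ) (hp : p.Prime) (hodd : Odd p) :
    (kappa p).Prime := by
  have hp2 := hp.two_le
  have hmem : p + 1 ∈ {n : ℕ | 0 < n ∧ ¬ p ∣ n ∧ fermatQuotient p n ≠ 0} := by
    refine ⟨by omega, ?_, ?_⟩
    · intro h
      have h1 : p ∣ 1 := (Nat.dvd_add_right dvd_rfl).mp h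
      have := Nat.le_of_dvd one_pos h1
      omega
    · have := fq_succ_ne p hp
      simpa using this
  have hne : {n : ℕ | 0 < n ∧ ¬ p ∣ n ∧ fermatQuotient p n ≠ 0}.Nonempty := ⟨_, hmem⟩
  have hκ : 0 < kappa p ∧ ¬ p ∣ kappa p ∧ fermatQuotient p (kappa p) ≠ 0 :=
    Nat.sInf_mem hne
  obtain ⟨hκpos, hκnd, hκfq⟩ := hκ
  have hκ1 : kappa p ≠ 1 := by
    intro h
    apply hκfq
    rw [h]
    simp [fermatQuotient]
  have hmfp : (kappa p).minFac.Prime := Nat.minFac_prime hκ1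
  have heq : (kappa p).minFac = kappa p := by
    by_contra hne'
    set m := (kappa p).minFac with hm
    have hmdvd : m ∣ kappa p := Nat.minFac_dvd _
    have hmlt : m < kappa p := lt_of_le_of_ne (Nat.le_of_dvd hκpos hmdvd) hne'
    set c := kappa p / m with hc
    have hmc : m * c = kappa p := Nat.mul_div_cancel' hmdvd
    have hcpos : 0 < c := by
      rcases Nat.eq_zero_or_pos c with h | h
      · rw [h, mul_zero] at hmc; omega
      · exact h
    have hclt : c < kappa p := by
      have hm2 : 2 ≤ m := hmfp.two_le
      nlinarith [hmc]
    have hpm : ¬ p ∣ m := fun h => hκnd (h.trans hmdvd)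
    have hpc : ¬ p ∣ c := fun h => hκnd (h.trans ⟨m, by rw [← hmc, mul_comm]⟩)
    have hfm : fermatQuotient p (m:ℤ) = 0 := by
      by_contra hf
      have hmm : m ∈ {n : ℕ | 0 < n ∧ ¬ p ∣ n ∧ fermatQuotient p n ≠ 0} :=
        ⟨hmfp.pos, hpm, hf⟩
      have hle : kappa p ≤ m := Nat.sInf_le hmm
      omega
    have hfc : fermatQuotient p (c:ℤ) = 0 := by
      by_contra hf
      have hcm : c ∈ {n : ℕ | 0 < n ∧ ¬ p ∣ n ∧ fermatQuotient p n ≠ 0} :=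
        ⟨hcpos, hpc, hf⟩
      have hle : kappa p ≤ c := Nat.sInf_le hcm
      omega
    have hpmz : ¬ (p:ℤ) ∣ (m:ℤ) := by rwa [Int.natCast_dvd_natCast]
    have hpcz : ¬ (p:ℤ) ∣ (c:ℤ) := by rwa [Int.natCast_dvd_natCast]
    have hmul := fq_mul_zero p hp m c hpmz hpcz hfm hfc
    apply hκfq
    rw [← hmc]
    push_cast at hmul ⊢
    exact hmul
  rw [← heq]
  exact hmfp
end

section
/- Let p be an odd prime and z ∈ 𝔽_p with z ≠ 0, z ≠ 1 and z ≠ −1. If γ_p(z) = 0 and γ_p(z + 1) = 0, then γ_p(z²) = 0 in 𝔽_p. -/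
open Finset Polynomial

theorem ZMod.sum_univ_eq_sum_range {M : Type*} [AddCommMonoid M] {n : ℕ} [NeZero n]
    (f : ZMod n → M) : ∑ x, f x = ∑ i ∈ range n, f i :=
  sum_nbij' ZMod.val Nat.cast (fun x _ => mem_range.2 x.val_lt) (fun _ _ => mem_univ _)
    (fun x _ => ZMod.natCast_zmod_val x) (fun _ hi => ZMod.val_natCast_of_lt (mem_range.1 hi))
    (fun x _ => by rw [ZMod.natCast_zmod_val])

theorem ZMod.natCast_ne_zero_of_pos_of_lt {n i : ℕ} (h0 : 0 < i) (hi : i < n) :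
    (i : ZMod n) ≠ 0 := by
  rw [Ne, ZMod.natCast_eq_zero_iff]
  exact Nat.not_dvd_of_pos_of_lt h0 hi

theorem Polynomial.natDegree_eq_zero_of_derivative_eq_zero_of_natDegree_lt {R : Type*}
    [CommRing R] [IsDomain R] {p : ℕ} [CharP R p] (hp : p ≠ 0) {f : R[X]}
    (hf : derivative f = 0) (hdeg : f.natDegree < p) : f.natDegree = 0 := by
  rw [← expand_contract p hf hp, natDegree_expand] at hdeg ⊢
  have : (contract p f).natDegree < 1 := lt_of_mul_lt_mul_right (by rwa [one_mul]) (Nat.zero_le p)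
  rw [Nat.lt_one_iff.1 this, zero_mul]

theorem geom_sum_add_geom_sum_comp_one_sub {R : Type*} [CommRing R] [IsDomain R] (p : ℕ)
    [Fact p.Prime] [CharP R p] :
    ∑ i ∈ range (p - 1), (X : R[X]) ^ i + (∑ i ∈ range (p - 1), X ^ i).comp (1 - X) = 0 := by
  have hX : (X : R[X]) * (1 - X) ≠ 0 :=
    mul_ne_zero X_ne_zero fun h => by simpa using congrArg (eval 0) h
  refine (mul_eq_zero.1 ?_).resolve_left hX
  have hpow (q : R[X]) : q ^ p = q * q ^ (p - 1) := by
    rw [← pow_succ', Nat.sub_add_cancel (Fact.out : p.Prime).one_le]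
  calc (X : R[X]) * (1 - X) *
        (∑ i ∈ range (p - 1), X ^ i + (∑ i ∈ range (p - 1), X ^ i).comp (1 - X))
      = X * ((1 - X) * ∑ i ∈ range (p - 1), X ^ i)
          + (1 - X) * ((1 - (1 - X)) * ∑ i ∈ range (p - 1), (1 - X) ^ i) := by
        simp only [Polynomial.sum_comp, pow_comp, X_comp]; ring
    _ = X * (1 - X ^ (p - 1)) + (1 - X) * (1 - (1 - X) ^ (p - 1)) := by
        rw [mul_neg_geom_sum, mul_neg_geom_sum]
    _ = 1 - X ^ p - (1 - X) ^ p := by rw [hpow, hpow]; ring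
    _ = 0 := by rw [sub_pow_char, one_pow]; ring

theorem one_add_add_one_sub_mul_neg_one_pow {R : Type*} [CommRing R] (t : R) (n : ℕ) :
    (1 + t) + (1 - t) * (-1) ^ n = 2 * if Even n then 1 else t := by
  rcases n.even_or_odd with hn | hn
  · rw [hn.neg_one_pow, if_pos hn]; ring
  · rw [hn.neg_one_pow, if_neg (Nat.not_even_iff_odd.2 hn)]; ring

section NeZero

variable {p : ℕ} [NeZero p]

-- The added `i = 0` term vanishes only because `(0 : ZMod p)⁻¹ = 0`.
theorem mirimanoff_eq_sum_range (t : ZMod p) :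
    mirimanoff p t = ∑ i ∈ range p, (i : ZMod p)⁻¹ * t ^ i := by
  have hp := NeZero.one_le (n := p)
  rw [mirimanoff, range_eq_Ico, sum_eq_sum_Ico_succ_bot (by omega), Nat.cast_zero, ZMod.inv_zero,
    zero_mul, zero_add, Icc_sub_one_right_eq_Ico_of_not_isMin (by simp; omega)]

theorem mirimanoff_eq_sum_univ (t : ZMod p) :
    mirimanoff p t = ∑ x : ZMod p, x⁻¹ * t ^ x.val := by
  rw [mirimanoff_eq_sum_range, ZMod.sum_univ_eq_sum_range]
  refine sum_congr rfl fun i hi => ?_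
  rw [ZMod.val_natCast_of_lt (mem_range.1 hi)]

noncomputable def mirimanoffPoly (p : ℕ) : (ZMod p)[X] :=
  ∑ i ∈ range p, C (i : ZMod p)⁻¹ * X ^ i

theorem eval_mirimanoffPoly (t : ZMod p) : (mirimanoffPoly p).eval t = mirimanoff p t := by
  simp [mirimanoffPoly, mirimanoff_eq_sum_range, eval_finsetSum]

theorem natDegree_mirimanoffPoly_lt : (mirimanoffPoly p).natDegree < p := by
  have hp := NeZero.one_le (n := p)
  refine (natDegree_sum_le_of_forall_le _ _ (n := p - 1) fun i hi => ?_).trans_lt (by omega)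
  exact (natDegree_C_mul_X_pow_le _ _).trans (by have := mem_range.1 hi; omega)

end NeZero

section Prime

variable {p : ℕ} [Fact p.Prime]

theorem derivative_mirimanoffPoly :
    derivative (mirimanoffPoly p) = ∑ i ∈ range (p - 1), X ^ i := by
  obtain ⟨n, rfl⟩ := Nat.exists_eq_add_one.2 (Fact.out : p.Prime).pos
  rw [mirimanoffPoly, derivative_sum, sum_range_succ', Nat.add_sub_cancel]
  simp only [derivative_C_mul_X_pow, Nat.cast_zero, mul_zero, C_0, zero_mul, add_zero]
  refine sum_congr rfl fun i hi => ?_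
  rw [inv_mul_cancel₀ (ZMod.natCast_ne_zero_of_pos_of_lt i.succ_pos (by simpa using hi)),
    C_1, one_mul, Nat.add_sub_cancel]

theorem ZMod.two_ne_zero_of_ne_two (hp2 : p ≠ 2) : (2 : ZMod p) ≠ 0 :=
  Ring.two_ne_zero (by rwa [ZMod.ringChar_zmod_n])

theorem mirimanoff_one_sub (hp2 : p ≠ 2) (t : ZMod p) :
    mirimanoff p (1 - t) = mirimanoff p t := by
  set D := mirimanoffPoly p - (mirimanoffPoly p).comp (1 - X)
  have hD : derivative D = 0 := by
    rw [derivative_sub, derivative_comp_one_sub_X, derivative_mirimanoffPoly, sub_neg_eq_add,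
      geom_sum_add_geom_sum_comp_one_sub]
  have hdeg : D.natDegree < p := by
    refine (natDegree_sub_le _ _).trans_lt (max_lt natDegree_mirimanoffPoly_lt ?_)
    refine natDegree_comp_le.trans_lt (mul_lt_of_lt_of_le_one natDegree_mirimanoffPoly_lt ?_)
    exact (natDegree_sub_le_of_le natDegree_one.le natDegree_X_le).trans (by simp)
  have hconst := eq_C_of_natDegree_eq_zero
    (natDegree_eq_zero_of_derivative_eq_zero_of_natDegree_lt (Fact.out : p.Prime).ne_zero hD hdeg)
  have hat_t := congrArg (eval t) hconst
  have hat_one_sub := congrArg (eval (1 - t)) hconst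
  simp only [D, eval_sub, eval_comp, eval_C, eval_one, eval_X, sub_sub_cancel,
    eval_mirimanoffPoly] at hat_t hat_one_sub
  have htwice : (2 : ZMod p) * (mirimanoff p t - mirimanoff p (1 - t)) = 0 := by
    linear_combination hat_t - hat_one_sub
  linear_combination -(mul_eq_zero.1 htwice).resolve_left (ZMod.two_ne_zero_of_ne_two hp2)

-- `(2x).val` is `2 x.val` or, when that is `≥ p`, the odd number `2 x.val - p`;
-- then `t ^ p = t` supplies the missing factor.
theorem ZMod.pow_val_two_mul_mul_ite (hp2 : p ≠ 2) (t x : ZMod p) :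
    t ^ (2 * x).val * (if Even (2 * x).val then 1 else t) = t ^ (2 * x.val) := by
  have hodd := (Fact.out : p.Prime).odd_of_ne_two hp2
  have hp := (Fact.out : p.Prime).two_le
  have hx := x.val_lt
  rw [ZMod.val_mul, ZMod.val_two_eq_two_mod, Nat.mod_eq_of_lt (by omega : 2 < p)]
  by_cases h : 2 * x.val < p
  · rw [Nat.mod_eq_of_lt h, if_pos (even_two_mul _), mul_one]
  · have hsub : 2 * x.val % p = 2 * x.val - p := by
      rw [Nat.mod_eq_sub_mod (by omega), Nat.mod_eq_of_lt (by omega)]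
    have hnot_even : ¬ Even (2 * x.val - p) := by
      rw [Nat.not_even_iff_odd]
      exact (Nat.odd_sub (by omega)).2 (iff_of_false (by simp) (Nat.not_even_iff_odd.2 hodd))
    rw [hsub, if_neg hnot_even]
    nth_rewrite 2 [← ZMod.pow_card t]
    rw [← pow_add, Nat.sub_add_cancel (by omega)]

theorem mirimanoff_sq (hp2 : p ≠ 2) (t : ZMod p) :
    mirimanoff p (t ^ 2) = (1 + t) * mirimanoff p t + (1 - t) * mirimanoff p (-t) := by
  have h2 := ZMod.two_ne_zero_of_ne_two hp2
  simp only [mirimanoff_eq_sum_univ, mul_sum, ← sum_add_distrib]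
  refine Fintype.sum_equiv (Equiv.mulLeft₀ 2 h2) _ _ fun x => ?_
  calc x⁻¹ * (t ^ 2) ^ x.val
      = x⁻¹ * (2⁻¹ * 2) * (t ^ (2 * x).val * if Even (2 * x).val then 1 else t) := by
        rw [ZMod.pow_val_two_mul_mul_ite hp2, inv_mul_cancel₀ h2, mul_one, pow_mul]
    _ = (2 * x)⁻¹ * t ^ (2 * x).val * ((1 + t) + (1 - t) * (-1) ^ (2 * x).val) := by
        rw [one_add_add_one_sub_mul_neg_one_pow, mul_inv]; ring
    _ = _ := by rw [Equiv.mulLeft₀_apply, neg_pow t]; ring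

end Prime

theorem mirimanoff_sq_zero_general (p : ℕ) (hp : p.Prime) (hodd : Odd p)
    (z : ZMod p) (h1 : mirimanoff p z = 0) (h2 : mirimanoff p (z + 1) = 0) :
    mirimanoff p (z ^ 2) = 0 := by
  have := Fact.mk hp
  have hp2 : p ≠ 2 := by
    rintro rfl
    exact Nat.not_odd_iff_even.2 even_two hodd
  have hneg : mirimanoff p (-z) = 0 := by
    rw [← mirimanoff_one_sub hp2, sub_neg_eq_add, add_comm, h2]
  rw [mirimanoff_sq hp2, h1, hneg]
  ring

theorem mirimanoff_sq_zero (p : ℕ) (hp : p.Prime) (hodd : Odd p)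
    (z : ZMod p) (hz0 : z ≠ 0) (hz1 : z ≠ 1) (hzm1 : z ≠ -1)
    (h1 : mirimanoff p z = 0) (h2 : mirimanoff p (z + 1) = 0) :
    mirimanoff p (z ^ 2) = 0 :=
  mirimanoff_sq_zero_general p hp hodd z h1 h2
end
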